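/- arXiv:2210.05492 — 3 statements merged into one kernel-verified Lean document; each statement's English description precedes it below -/
import Mathlib

section
/- For every t ≥ 1, the piKL iterate x^{t+1} is the unique maximizer over the simplex Δ(A) of the function x ↦ −φ(x)/(η t) + ⟨Ū^t, x⟩ − λ D_KL(x‖τ), where Ū^t := (1/t)∑_{s=1}^t u^s. In other words, the closed-form softmax update of piKL coincides with the follow-the-regularized-leader update for the KL-regularized utilities. -/
/-!
Write `c = λ + 1/(η t)` and `w = (Ū^t + λ log τ) / c`. Since `D_KL(x‖τ) = φ(x) - ⟨log τ, x⟩`, the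
objective equals `c (⟨w, x⟩ - φ(x))`, and on the simplex the Gibbs variational identity
`⟨w, x⟩ - φ(x) = log ∑ₐ exp (w a) - D_KL(x‖softmax w)` holds. By Gibbs' inequality the right-hand
side is maximal exactly at `x = softmax w`, which is the piKL iterate `x^{t+1}`.
-/

open Finset Real

noncomputable section

/-- The probability simplex over a finite set `A`. -/
def simplex (A : Type*) [Fintype A] : Set (A → ℝ) :=
  {x | (∀ a, 0 ≤ x a) ∧ ∑ a, x a = 1}

/-- KL divergence (with the convention `0 log 0 = 0`, automatic here). -/
def KL {A : Type*} [Fintype A] (x y : A → ℝ) : ℝ :=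
  ∑ a, x a * Real.log (x a / y a)

/-- Negative entropy. -/
def negEnt {A : Type*} [Fintype A] (x : A → ℝ) : ℝ :=
  ∑ a, x a * Real.log (x a)

/-- Euclidean inner product on `A → ℝ`. -/
def ip {A : Type*} [Fintype A] (u x : A → ℝ) : ℝ := ∑ a, u a * x a

open InformationTheory

variable {A : Type*} [Fintype A]

def softmax (w : A → ℝ) : A → ℝ := fun a => exp (w a) / ∑ b, exp (w b)

section softmax

variable [Nonempty A] (w : A → ℝ)

lemma sum_exp_pos : 0 < ∑ b, exp (w b) :=
  Finset.sum_pos (fun b _ => exp_pos (w b)) univ_nonempty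

lemma softmax_pos (a : A) : 0 < softmax w a :=
  div_pos (exp_pos _) (sum_exp_pos w)

lemma softmax_mem_simplex : softmax w ∈ simplex A :=
  ⟨fun a => (softmax_pos w a).le, by
    simp only [softmax, ← Finset.sum_div, div_self (sum_exp_pos w).ne']⟩

lemma log_softmax (a : A) : log (softmax w a) = w a - log (∑ b, exp (w b)) := by
  rw [softmax, log_div (exp_pos _).ne' (sum_exp_pos w).ne', log_exp]

end softmax

lemma KL_eq_negEnt_sub_ip (y : A → ℝ) {p : A → ℝ} (hp : ∀ a, p a ≠ 0) :
    KL y p = negEnt y - ip (fun a => log (p a)) y := by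
  simp only [KL, negEnt, ip, ← Finset.sum_sub_distrib]
  refine Finset.sum_congr rfl fun a _ => ?_
  rcases eq_or_ne (y a) 0 with hya | hya
  · simp [hya]
  · rw [log_div hya (hp a)]
    ring

lemma KL_self {p : A → ℝ} (hp : ∀ a, p a ≠ 0) : KL p p = 0 :=
  Finset.sum_eq_zero fun a _ => by rw [div_self (hp a), log_one, mul_zero]

/-- The summands `p * klFun (y / p)` are nonnegative, which is Gibbs' inequality. -/
lemma KL_eq_sum_mul_klFun {y p : A → ℝ} (hp : ∀ a, 0 < p a) (hsum : ∑ a, y a = ∑ a, p a) :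
    KL y p = ∑ a, p a * klFun (y a / p a) := by
  have hterm : ∀ a, p a * klFun (y a / p a) = y a * log (y a / p a) + (p a - y a) := by
    intro a
    rw [klFun_apply]
    field_simp [(hp a).ne']
    ring
  simp only [hterm, Finset.sum_add_distrib, Finset.sum_sub_distrib, hsum, sub_self, add_zero, KL]

lemma KL_pos_of_ne {y p : A → ℝ} (hy : ∀ a, 0 ≤ y a) (hp : ∀ a, 0 < p a)
    (hsum : ∑ a, y a = ∑ a, p a) (hne : y ≠ p) : 0 < KL y p := by
  obtain ⟨a, ha⟩ := Function.ne_iff.mp hne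
  have hratio : ∀ b, 0 ≤ y b / p b := fun b => div_nonneg (hy b) (hp b).le
  rw [KL_eq_sum_mul_klFun hp hsum]
  refine Finset.sum_pos' (fun b _ => mul_nonneg (hp b).le (klFun_nonneg (hratio b)))
    ⟨a, mem_univ a, mul_pos (hp a) ((klFun_nonneg (hratio a)).lt_of_ne' ?_)⟩
  rw [Ne, klFun_eq_zero_iff (hratio a), div_eq_one_iff_eq (hp a).ne']
  exact ha

lemma ip_sub_negEnt_eq_log_sum_exp_sub_KL [Nonempty A] (w : A → ℝ) {y : A → ℝ}
    (hy : y ∈ simplex A) :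
    ip w y - negEnt y = log (∑ b, exp (w b)) - KL y (softmax w) := by
  have hip : ip (fun a => log (softmax w a)) y = ip w y - log (∑ b, exp (w b)) := by
    simp only [ip, log_softmax, sub_mul, Finset.sum_sub_distrib, ← Finset.mul_sum, hy.2, mul_one]
  rw [KL_eq_negEnt_sub_ip y fun a => (softmax_pos w a).ne', hip]
  ring

lemma ip_sub_negEnt_lt_of_ne_softmax [Nonempty A] (w : A → ℝ) {y : A → ℝ}
    (hy : y ∈ simplex A) (hne : y ≠ softmax w) :
    ip w y - negEnt y < ip w (softmax w) - negEnt (softmax w) := by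
  rw [ip_sub_negEnt_eq_log_sum_exp_sub_KL w hy,
    ip_sub_negEnt_eq_log_sum_exp_sub_KL w (softmax_mem_simplex w),
    KL_self fun a => (softmax_pos w a).ne']
  have hsum : ∑ a, y a = ∑ a, softmax w a := by rw [hy.2, (softmax_mem_simplex w).2]
  linarith [KL_pos_of_ne hy.1 (softmax_pos w) hsum hne]

lemma KL_regularized_objective_eq (U : A → ℝ) {τ : A → ℝ} (hτ : ∀ a, τ a ≠ 0) {lam s : ℝ}
    (hc : lam + 1 / s ≠ 0) (y : A → ℝ) :
    -(negEnt y) / s + ip U y - lam * KL y τ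
      = (lam + 1 / s) *
          (ip (fun a => (U a + lam * log (τ a)) / (lam + 1 / s)) y - negEnt y) := by
  have hip : (lam + 1 / s) * ip (fun a => (U a + lam * log (τ a)) / (lam + 1 / s)) y
      = ip U y + lam * ip (fun a => log (τ a)) y := by
    simp only [ip, Finset.mul_sum, ← Finset.sum_add_distrib]
    refine Finset.sum_congr rfl fun a _ => ?_
    field_simp
  rw [mul_sub, hip, KL_eq_negEnt_sub_ip y hτ]
  ring

end

theorem pikl_iterate_is_unique_ftrl_maximizer_general
    {A : Type*} [Fintype A] [Nonempty A]
    (τ : A → ℝ) (hτpos : ∀ a, 0 < τ a)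
    (lam η : ℝ) (hlam : 0 < lam) (hη : 0 < η)
    (u : ℕ → A → ℝ)
    (x : ℕ → A → ℝ)
    (hxsucc : ∀ t, 1 ≤ t → ∀ a : A,
      x (t + 1) a =
        Real.exp ((((t : ℝ)⁻¹ * ∑ s ∈ Finset.Icc 1 t, u s a) + lam * Real.log (τ a))
            / (lam + 1 / (η * t)))
        / ∑ b, Real.exp ((((t : ℝ)⁻¹ * ∑ s ∈ Finset.Icc 1 t, u s b) + lam * Real.log (τ b))
            / (lam + 1 / (η * t)))) :
    ∀ t, 1 ≤ t →
      x (t + 1) ∈ simplex A ∧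
      ∀ y ∈ simplex A, y ≠ x (t + 1) →
        (-(negEnt y) / (η * t)
            + ip (fun a => (t : ℝ)⁻¹ * ∑ s ∈ Finset.Icc 1 t, u s a) y
            - lam * KL y τ)
        < (-(negEnt (x (t + 1))) / (η * t)
            + ip (fun a => (t : ℝ)⁻¹ * ∑ s ∈ Finset.Icc 1 t, u s a) (x (t + 1))
            - lam * KL (x (t + 1)) τ) := by
  intro t ht
  have hc : 0 < lam + 1 / (η * t) := by
    have : (0 : ℝ) < t := by exact_mod_cast ht
    positivity
  set U : A → ℝ := fun a => (t : ℝ)⁻¹ * ∑ s ∈ Finset.Icc 1 t, u s a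
  have hx : x (t + 1) = softmax fun a => (U a + lam * log (τ a)) / (lam + 1 / (η * t)) :=
    funext (hxsucc t ht)
  have hτ : ∀ a, τ a ≠ 0 := fun a => (hτpos a).ne'
  refine ⟨hx ▸ softmax_mem_simplex _, fun y hy hne => ?_⟩
  rw [KL_regularized_objective_eq U hτ hc.ne', KL_regularized_objective_eq U hτ hc.ne', hx]
  exact mul_lt_mul_of_pos_left (ip_sub_negEnt_lt_of_ne_softmax _ hy (hx ▸ hne)) hc

/-- For every `t ≥ 1`, the piKL iterate `x (t+1)` (given by the closed-form
softmax update) is the unique maximizer over the simplex of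
`x ↦ −φ(x)/(η t) + ⟨Ū^t, x⟩ − λ D_KL(x‖τ)`, where `Ū^t = (1/t) ∑_{s=1}^t u^s`. -/
theorem pikl_iterate_is_unique_ftrl_maximizer
    {A : Type*} [Fintype A] [Nonempty A]
    (τ : A → ℝ) (hτ : τ ∈ simplex A) (hτpos : ∀ a, 0 < τ a)
    (lam η : ℝ) (hlam : 0 < lam) (hη : 0 < η)
    (u : ℕ → A → ℝ)
    (x : ℕ → A → ℝ)
    (hx1 : ∀ a, x 1 a = (Fintype.card A : ℝ)⁻¹)
    (hxsucc : ∀ t, 1 ≤ t → ∀ a : A,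
      x (t + 1) a =
        Real.exp ((((t : ℝ)⁻¹ * ∑ s ∈ Finset.Icc 1 t, u s a) + lam * Real.log (τ a))
            / (lam + 1 / (η * t)))
        / ∑ b, Real.exp ((((t : ℝ)⁻¹ * ∑ s ∈ Finset.Icc 1 t, u s b) + lam * Real.log (τ b))
            / (lam + 1 / (η * t)))) :
    ∀ t, 1 ≤ t →
      x (t + 1) ∈ simplex A ∧
      ∀ y ∈ simplex A, y ≠ x (t + 1) →
        (-(negEnt y) / (η * t)
            + ip (fun a => (t : ℝ)⁻¹ * ∑ s ∈ Finset.Icc 1 t, u s a) y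
            - lam * KL y τ)
        < (-(negEnt (x (t + 1))) / (η * t)
            + ip (fun a => (t : ℝ)⁻¹ * ∑ s ∈ Finset.Icc 1 t, u s a) (x (t + 1))
            - lam * KL (x (t + 1)) τ) :=
  pikl_iterate_is_unique_ftrl_maximizer_general τ hτpos lam η hlam hη u x hxsucc
end

section
/- For every t ≥ 1 and all x, x' ∈ Δ(A), the piKL iterates satisfy the identity ⟨ (η/(ηλt + 1)) (−u^t + λ∇φ(x^t) − λ∇φ(τ)) + ∇φ(x^{t+1}) − ∇φ(x^t), x − x' ⟩ = 0. -/
/-!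
Taking logarithms, `(ηλt + 1) log x^{t+1}` equals `η ∑_{s ≤ t} (u^s + λ log τ)` up to an
additive constant, also for `t = 0` since `x^1` is constant. Multiplying the vector of the
statement by `ηλt + 1`, consecutive such identities telescope to `η (u^t + λ log τ)`, which
cancels the remaining terms; so the vector is constant, and a constant vector is orthogonal to
the difference of two probability vectors.
-/

open Finset Real

noncomputable section

/-- Gradient of the negative entropy `φ`. -/
def gradPhi {A : Type*} (y : A → ℝ) : A → ℝ := fun a => 1 + Real.log (y a)

theorem ip_sub_eq_zero_of_forall_eq {A : Type*} [Fintype A] {v y z : A → ℝ} {K : ℝ}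
    (hv : ∀ a, v a = K) (hsum : ∑ a, y a = ∑ a, z a) : ip v (y - z) = 0 := by
  simp only [ip, hv, Pi.sub_apply, ← mul_sum, sum_sub_distrib, hsum, sub_self, mul_zero]

theorem Real.log_exp_div_sum_exp {ι : Type*} [Fintype ι] (f : ι → ℝ) (i : ι) :
    log (exp (f i) / ∑ j, exp (f j)) = f i - log (∑ j, exp (f j)) := by
  have hZ : 0 < ∑ j, exp (f j) := sum_pos (fun j _ => exp_pos (f j)) ⟨i, mem_univ i⟩
  rw [log_div (exp_ne_zero _) hZ.ne', log_exp]

/-- The exponent of `x^{t+1}(a)` in the piKL update. -/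
def piklScore {A : Type*} (u : ℕ → A → ℝ) (τ : A → ℝ) (lam η : ℝ) (t : ℕ) (a : A) : ℝ :=
  (((t : ℝ)⁻¹ * ∑ s ∈ Icc 1 t, u s a) + lam * log (τ a)) / (lam + 1 / (η * t))

theorem mul_piklScore {A : Type*} (u : ℕ → A → ℝ) (τ : A → ℝ) {lam η : ℝ}
    (hlam : 0 < lam) (hη : 0 < η) {t : ℕ} (ht : 1 ≤ t) (a : A) :
    (η * lam * t + 1) * piklScore u τ lam η t a =
      η * ∑ s ∈ Icc 1 t, (u s a + lam * log (τ a)) := by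
  have ht' : (0 : ℝ) < t := by exact_mod_cast ht
  rw [piklScore, sum_add_distrib, sum_const, Nat.card_Icc, Nat.add_sub_cancel,
    nsmul_eq_mul]
  field_simp

theorem exists_mul_log_pikl_iterate_eq {A : Type*} [Fintype A] (τ : A → ℝ) {lam η : ℝ}
    (hlam : 0 < lam) (hη : 0 < η) (u x : ℕ → A → ℝ) {c : ℝ} (hx1 : ∀ a, x 1 a = c)
    (hxsucc : ∀ t, 1 ≤ t → ∀ a,
      x (t + 1) a = exp (piklScore u τ lam η t a) / ∑ b, exp (piklScore u τ lam η t b))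
    (t : ℕ) : ∃ C, ∀ a, (η * lam * t + 1) * log (x (t + 1) a) =
      η * ∑ s ∈ Icc 1 t, (u s a + lam * log (τ a)) + C := by
  rcases Nat.eq_zero_or_pos t with rfl | ht
  · exact ⟨log c, fun a => by simp [hx1]⟩
  · refine ⟨-(η * lam * t + 1) * log (∑ b, exp (piklScore u τ lam η t b)), fun a => ?_⟩
    rw [hxsucc t ht, log_exp_div_sum_exp, mul_sub, mul_piklScore u τ hlam hη ht]
    ring

theorem pikl_ftrl_to_omd_identity_general
    {A : Type*} [Fintype A]
    (τ : A → ℝ)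
    (lam η : ℝ) (hlam : 0 < lam) (hη : 0 < η)
    (u : ℕ → A → ℝ)
    (x : ℕ → A → ℝ)
    (hx1 : ∀ a, x 1 a = (Fintype.card A : ℝ)⁻¹)
    (hxsucc : ∀ t, 1 ≤ t → ∀ a : A,
      x (t + 1) a =
        Real.exp ((((t : ℝ)⁻¹ * ∑ s ∈ Finset.Icc 1 t, u s a) + lam * Real.log (τ a))
            / (lam + 1 / (η * t)))
        / ∑ b, Real.exp ((((t : ℝ)⁻¹ * ∑ s ∈ Finset.Icc 1 t, u s b) + lam * Real.log (τ b))
            / (lam + 1 / (η * t)))) :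
    ∀ t : ℕ, 1 ≤ t → ∀ xx ∈ simplex A, ∀ xx' ∈ simplex A,
      ip ((η / (η * lam * (t : ℝ) + 1)) • (-(u t) + lam • gradPhi (x t) - lam • gradPhi τ)
            + gradPhi (x (t + 1)) - gradPhi (x t))
         (xx - xx') = 0 := by
  intro t ht xx hxx xx' hxx'
  obtain ⟨m, rfl⟩ := Nat.exists_eq_add_of_le' ht
  obtain ⟨C₀, hC₀⟩ := exists_mul_log_pikl_iterate_eq τ hlam hη u x hx1 hxsucc m
  obtain ⟨C₁, hC₁⟩ := exists_mul_log_pikl_iterate_eq τ hlam hη u x hx1 hxsucc (m + 1)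
  refine ip_sub_eq_zero_of_forall_eq (K := (C₁ - C₀) / (η * lam * (m + 1) + 1))
    (fun a => ?_) (hxx.2.trans hxx'.2.symm)
  have hsplit := sum_Icc_succ_top (Nat.le_add_left 1 m) fun s => u s a + lam * log (τ a)
  have hden : η * lam * (m + 1) + 1 ≠ 0 := by positivity
  simp only [Pi.add_apply, Pi.sub_apply, Pi.smul_apply, Pi.neg_apply, smul_eq_mul, gradPhi,
    Nat.cast_add_one] at hC₁ ⊢
  field_simp
  linear_combination hC₁ a - hC₀ a + η * hsplit

/-- for every `t ≥ 1` and all `x, x' ∈ Δ(A)`, the piKL iterates satisfy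
`⟨ (η/(ηλt + 1)) (−u^t + λ∇φ(x^t) − λ∇φ(τ)) + ∇φ(x^{t+1}) − ∇φ(x^t), x − x' ⟩ = 0`. -/
theorem pikl_ftrl_to_omd_identity
    {A : Type*} [Fintype A] [Nonempty A]
    (τ : A → ℝ) (hτ : τ ∈ simplex A) (hτpos : ∀ a, 0 < τ a)
    (lam η : ℝ) (hlam : 0 < lam) (hη : 0 < η)
    (u : ℕ → A → ℝ)
    (x : ℕ → A → ℝ)
    (hx1 : ∀ a, x 1 a = (Fintype.card A : ℝ)⁻¹)
    (hxsucc : ∀ t, 1 ≤ t → ∀ a : A,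
      x (t + 1) a =
        Real.exp ((((t : ℝ)⁻¹ * ∑ s ∈ Finset.Icc 1 t, u s a) + lam * Real.log (τ a))
            / (lam + 1 / (η * t)))
        / ∑ b, Real.exp ((((t : ℝ)⁻¹ * ∑ s ∈ Finset.Icc 1 t, u s b) + lam * Real.log (τ b))
            / (lam + 1 / (η * t)))) :
    ∀ t : ℕ, 1 ≤ t → ∀ xx ∈ simplex A, ∀ xx' ∈ simplex A,
      ip ((η / (η * lam * (t : ℝ) + 1)) • (-(u t) + lam • gradPhi (x t) - lam • gradPhi τ)
            + gradPhi (x (t + 1)) - gradPhi (x t))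
         (xx - xx') = 0 :=
  pikl_ftrl_to_omd_identity_general τ lam η hlam hη u x hx1 hxsucc
end
end

section
/- The regularized two-player zero-sum Bayesian game admits exactly one Bayes–Nash equilibrium: there is exactly one collection (x*_{i,λ})_{i∈{1,2}, λ∈Λ_i} of policies x*_{i,λ} ∈ Δ(A_i) such that for every player i and every type λ ∈ Λ_i, x*_{i,λ} maximizes x ↦ ⟨M_i x̄*_{−i}, x⟩ − λ D_KL(x‖τ_i) over Δ(A_i), where x̄*_{−i} := E_{λ'∼β_{−i}}[x*_{−i,λ'}]. -/
open Finset Real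

noncomputable section

/-!
The objective `x ↦ ⟨u, x⟩ - λ KL(x ‖ τ)` equals `λ log Z - λ KL(x ‖ g)` on the simplex, where
`g ∝ τ · exp (u / λ)` is the Gibbs distribution and `Z` its normalizer; so every type's unique
best response is the Gibbs response to the opponent's mean policy, and an equilibrium is a saddle
point of the Lagrangian `L(p, q) = ⟨x̄, M ȳ⟩ - ∑ β₁ λ KL(p_λ ‖ τ₁) + ∑ β₂ λ KL(q_λ ‖ τ₂)`, which is
concave in player 1's profile `p` and convex in player 2's profile `q`.

Existence: minimize the upper value `q ↦ max_p L(p, q)` over the compact set of profiles; an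
envelope argument shows that the minimizer `q₀` also minimizes `L(p₀, ·)` for player 1's response
`p₀`, so `q₀` has the same mean as player 2's Gibbs response to `p₀`.
Uniqueness: saddle points are interchangeable, so for two equilibria `(p, q)` and `(p', q')` the
profile `q'` also minimizes `L(p, ·)`; by the equality case of Gibbs' inequality it then has the
mean of `q`, and Gibbs responses only see the opponent's mean.
-/

open InformationTheory Matrix Filter Topology

namespace RegularizedGame

section Convexity

variable {𝕜 E β ι : Type*} [Semiring 𝕜] [PartialOrder 𝕜] [AddCommMonoid E] [SMul 𝕜 E]
  [AddCommMonoid β] [PartialOrder β] [IsOrderedAddMonoid β] [Module 𝕜 β]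
  {s : Set E} {t : Finset ι} {f : ι → E → β}

lemma convexOn_finset_sum (hs : Convex 𝕜 s) (h : ∀ i ∈ t, ConvexOn 𝕜 s (f i)) :
    ConvexOn 𝕜 s fun x => ∑ i ∈ t, f i x := by
  rw [← Finset.sum_fn]
  exact Finset.sum_induction _ (ConvexOn 𝕜 s) (fun _ _ => ConvexOn.add) (convexOn_const 0 hs) h

lemma concaveOn_finset_sum (hs : Convex 𝕜 s) (h : ∀ i ∈ t, ConcaveOn 𝕜 s (f i)) :
    ConcaveOn 𝕜 s fun x => ∑ i ∈ t, f i x := by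
  rw [← Finset.sum_fn]
  exact Finset.sum_induction _ (ConcaveOn 𝕜 s) (fun _ _ => ConcaveOn.add) (concaveOn_const 0 hs) h

end Convexity

-- Along the segment from `q₀` to `q`, convexity and minimality of `q₀` give
-- `L (br c) q₀ ≤ L (br c) q` at every point `c ≠ q₀`; then let `c → q₀`.
theorem isMinOn_of_isMinOn_maxValue {P E : Type*} [TopologicalSpace P] [AddCommGroup E]
    [Module ℝ E] [TopologicalSpace E] [IsTopologicalAddGroup E] [ContinuousSMul ℝ E]
    {S : Set P} {Q : Set E} {L : P → E → ℝ} {br : E → P}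
    (hL : Continuous (Function.uncurry L)) (hbr : Continuous br)
    (hconv : ∀ p ∈ S, ConvexOn ℝ Q (L p)) (hbrS : ∀ q ∈ Q, br q ∈ S)
    {q₀ : E} (hq₀ : q₀ ∈ Q) (hbrmax : IsMaxOn (fun p => L p q₀) S (br q₀))
    (hmin : IsMinOn (fun q => L (br q) q) Q q₀) :
    IsMinOn (L (br q₀)) Q q₀ := by
  intro q hq
  have hQ : Convex ℝ Q := (hconv _ (hbrS q₀ hq₀)).1
  let c : ℝ → E := AffineMap.lineMap q₀ q
  let g : ℝ → ℝ := fun t => L (br (c t)) q - L (br (c t)) q₀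
  have hg : Continuous g := by
    have := AffineMap.lineMap_continuous (p := q₀) (q := q) (R := ℝ)
    fun_prop
  have hpos : ∀ t ∈ Set.Ioc (0 : ℝ) 1, 0 ≤ g t := by
    rintro t ⟨ht0, ht1⟩
    have hc : c t ∈ Q := hQ.lineMap_mem hq₀ hq ⟨ht0.le, ht1⟩
    have hconvex : L (br (c t)) (c t) ≤ (1 - t) * L (br (c t)) q₀ + t * L (br (c t)) q := by
      simpa [c, AffineMap.lineMap_apply_module] using
        (hconv _ (hbrS _ hc)).2 hq₀ hq (by linarith) ht0.le (by ring)
    have hvalue : L (br (c t)) q₀ ≤ L (br (c t)) (c t) :=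
      (hbrmax (hbrS _ hc)).trans (hmin hc)
    simp only [g]
    nlinarith
  have h0 : 0 ≤ g 0 := ge_of_tendsto ((hg.tendsto 0).mono_left nhdsWithin_le_nhds)
    (eventually_of_mem (Ioc_mem_nhdsGT zero_lt_one) hpos)
  simpa [g, c] using h0

section KL

variable {A : Type*} [Fintype A]

lemma ip_eq_dotProduct (u x : A → ℝ) : ip u x = u ⬝ᵥ x := rfl

lemma KL_eq_sum_mul_klFun {x y : A → ℝ} (hy : ∀ a, 0 < y a) (hsum : ∑ a, x a = ∑ a, y a) :
    KL x y = ∑ a, y a * klFun (x a / y a) := by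
  have hterm : ∀ a, y a * klFun (x a / y a) = x a * log (x a / y a) + (y a - x a) := by
    intro a
    have := (hy a).ne'
    simp only [klFun]
    field_simp
    ring
  simp only [hterm, sum_add_distrib, sum_sub_distrib, hsum, sub_self, add_zero, KL]

lemma KL_nonneg {x y : A → ℝ} (hx : 0 ≤ x) (hy : ∀ a, 0 < y a)
    (hsum : ∑ a, x a = ∑ a, y a) : 0 ≤ KL x y := by
  rw [KL_eq_sum_mul_klFun hy hsum]
  exact sum_nonneg fun a _ => mul_nonneg (hy a).le (klFun_nonneg (div_nonneg (hx a) (hy a).le))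

lemma KL_eq_zero_iff {x y : A → ℝ} (hx : 0 ≤ x) (hy : ∀ a, 0 < y a)
    (hsum : ∑ a, x a = ∑ a, y a) : KL x y = 0 ↔ x = y := by
  have hnonneg : ∀ a ∈ univ, 0 ≤ y a * klFun (x a / y a) := fun a _ =>
    mul_nonneg (hy a).le (klFun_nonneg (div_nonneg (hx a) (hy a).le))
  rw [KL_eq_sum_mul_klFun hy hsum, sum_eq_zero_iff_of_nonneg hnonneg, funext_iff]
  refine forall_congr' fun a => ?_
  rw [mul_eq_zero, or_iff_right (hy a).ne', klFun_eq_zero_iff (div_nonneg (hx a) (hy a).le),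
    div_eq_one_iff_eq (hy a).ne']
  simp

lemma convexOn_KL {τ : A → ℝ} (hτ : ∀ a, 0 < τ a) : ConvexOn ℝ (Set.Ici 0) fun x => KL x τ := by
  refine convexOn_finset_sum (convex_Ici 0) fun a _ => ?_
  let scale : (A → ℝ) →ₗ[ℝ] ℝ := (τ a)⁻¹ • LinearMap.proj (φ := fun _ => ℝ) a
  have h := (convexOn_mul_log.smul (hτ a).le).comp_linearMap scale
  refine (h.subset (fun x hx => ?_) (convex_Ici 0)).congr fun x _ => ?_
  · exact mul_nonneg (inv_nonneg.2 (hτ a).le) (hx a)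
  · have := (hτ a).ne'
    simp only [scale, Function.comp_apply, LinearMap.smul_apply, LinearMap.coe_proj,
      Function.eval, smul_eq_mul]
    field_simp

@[fun_prop]
lemma continuous_KL (τ : A → ℝ) : Continuous fun x : A → ℝ => KL x τ := by
  refine continuous_finsetSum _ fun a _ => ?_
  rcases eq_or_ne (τ a) 0 with h | h
  · simpa [h] using continuous_const
  · have heq : (fun x : A → ℝ => x a * log (x a / τ a))
        = fun x => τ a * (x a / τ a * log (x a / τ a)) := by
      funext x; field_simp
    rw [heq]
    exact continuous_const.mul (continuous_mul_log.comp (by fun_prop))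

end KL

section Gibbs

variable {A : Type*} [Fintype A]

def partitionFn (lam : ℝ) (u τ : A → ℝ) : ℝ := ∑ a, τ a * exp (u a / lam)

def gibbs (lam : ℝ) (u τ : A → ℝ) : A → ℝ := fun a => τ a * exp (u a / lam) / partitionFn lam u τ

def regPayoff (lam : ℝ) (τ u x : A → ℝ) : ℝ := ip u x - lam * KL x τ

variable {lam : ℝ} {u τ x : A → ℝ}

lemma concaveOn_regPayoff (hlam : 0 ≤ lam) (hτ : ∀ a, 0 < τ a) :
    ConcaveOn ℝ (Set.Ici 0) (regPayoff lam τ u) :=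
  ((dotProductBilin ℝ ℝ u).concaveOn (convex_Ici 0)).sub ((convexOn_KL hτ).smul hlam)

variable [Nonempty A]

lemma partitionFn_pos (hτ : ∀ a, 0 < τ a) : 0 < partitionFn lam u τ :=
  sum_pos (fun a _ => mul_pos (hτ a) (exp_pos _)) univ_nonempty

lemma gibbs_pos (hτ : ∀ a, 0 < τ a) (a : A) : 0 < gibbs lam u τ a :=
  div_pos (mul_pos (hτ a) (exp_pos _)) (partitionFn_pos hτ)

lemma sum_gibbs (hτ : ∀ a, 0 < τ a) : ∑ a, gibbs lam u τ a = 1 := by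
  simp only [gibbs, ← sum_div]
  exact div_self (partitionFn_pos hτ).ne'

lemma gibbs_mem_simplex (hτ : ∀ a, 0 < τ a) : gibbs lam u τ ∈ simplex A :=
  ⟨fun a => (gibbs_pos hτ a).le, sum_gibbs hτ⟩

lemma continuous_gibbs (hτ : ∀ a, 0 < τ a) : Continuous fun u : A → ℝ => gibbs lam u τ := by
  refine continuous_pi fun a => ?_
  simp only [gibbs, partitionFn]
  exact Continuous.div (by fun_prop) (by fun_prop) fun u => (partitionFn_pos hτ).ne'

lemma regPayoff_eq (hlam : lam ≠ 0) (hτ : ∀ a, 0 < τ a) (hx : ∑ a, x a = 1) :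
    regPayoff lam τ u x = lam * log (partitionFn lam u τ) - lam * KL x (gibbs lam u τ) := by
  have hterm : ∀ a, x a * log (x a / gibbs lam u τ a)
      = x a * log (x a / τ a) - u a * x a / lam + x a * log (partitionFn lam u τ) := by
    intro a
    rcases eq_or_ne (x a) 0 with hxa | hxa
    · simp [hxa]
    · rw [log_div hxa (gibbs_pos hτ a).ne', log_div hxa (hτ a).ne', gibbs,
        log_div (mul_pos (hτ a) (exp_pos _)).ne' (partitionFn_pos hτ).ne',
        log_mul (hτ a).ne' (exp_pos _).ne', log_exp]
      field_simp
      ring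
  simp only [regPayoff, KL, ip, hterm, sum_add_distrib, sum_sub_distrib, ← sum_div, ← sum_mul, hx]
  field_simp
  ring

lemma regPayoff_gibbs_sub (hlam : lam ≠ 0) (hτ : ∀ a, 0 < τ a) (hx : ∑ a, x a = 1) :
    regPayoff lam τ u (gibbs lam u τ) - regPayoff lam τ u x = lam * KL x (gibbs lam u τ) := by
  have hself : KL (gibbs lam u τ) (gibbs lam u τ) = 0 :=
    (KL_eq_zero_iff (fun a => (gibbs_pos hτ a).le) (gibbs_pos hτ) rfl).2 rfl
  rw [regPayoff_eq hlam hτ hx, regPayoff_eq hlam hτ (sum_gibbs hτ), hself]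
  ring

lemma regPayoff_le_regPayoff_gibbs (hlam : 0 < lam) (hτ : ∀ a, 0 < τ a) (hx : x ∈ simplex A) :
    regPayoff lam τ u x ≤ regPayoff lam τ u (gibbs lam u τ) := by
  rw [← sub_nonneg, regPayoff_gibbs_sub hlam.ne' hτ hx.2]
  exact mul_nonneg hlam.le (KL_nonneg hx.1 (gibbs_pos hτ) (hx.2.trans (sum_gibbs hτ).symm))

lemma eq_gibbs_of_regPayoff_gibbs_le (hlam : 0 < lam) (hτ : ∀ a, 0 < τ a) (hx : x ∈ simplex A)
    (h : regPayoff lam τ u (gibbs lam u τ) ≤ regPayoff lam τ u x) : x = gibbs lam u τ := by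
  have hsum := hx.2.trans (sum_gibbs (lam := lam) (u := u) hτ).symm
  have hKL : lam * KL x (gibbs lam u τ) ≤ lam * 0 := by
    rw [mul_zero, ← regPayoff_gibbs_sub hlam.ne' hτ hx.2, sub_nonpos]
    exact h
  exact (KL_eq_zero_iff hx.1 (gibbs_pos hτ) hsum).1
    (le_antisymm (le_of_mul_le_mul_left hKL hlam) (KL_nonneg hx.1 (gibbs_pos hτ) hsum))

lemma mem_simplex_and_isMaxOn_regPayoff_iff (hlam : 0 < lam) (hτ : ∀ a, 0 < τ a) :
    x ∈ simplex A ∧ IsMaxOn (regPayoff lam τ u) (simplex A) x ↔ x = gibbs lam u τ := by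
  constructor
  · rintro ⟨hx, hmax⟩
    exact eq_gibbs_of_regPayoff_gibbs_le hlam hτ hx (hmax (gibbs_mem_simplex hτ))
  · rintro rfl
    exact ⟨gibbs_mem_simplex hτ, fun y hy => regPayoff_le_regPayoff_gibbs hlam hτ hy⟩

end Gibbs

section Profile

variable {ι A : Type*}

def mean [Fintype ι] (w : ι → ℝ) (p : ι → A → ℝ) : A → ℝ := fun a => ∑ i, w i * p i a

lemma mean_congr [Fintype ι] {w : ι → ℝ} {p p' : ι → A → ℝ}
    (h : ∀ i, w i ≠ 0 → p i = p' i) : mean w p = mean w p' := by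
  funext a
  refine sum_congr rfl fun i _ => ?_
  rcases eq_or_ne (w i) 0 with hw | hw
  · simp [hw]
  · rw [h i hw]

@[fun_prop]
lemma continuous_mean [Fintype ι] (w : ι → ℝ) : Continuous (mean w : (ι → A → ℝ) → A → ℝ) := by
  unfold mean
  fun_prop

variable [Fintype A]

lemma dotProduct_mean [Fintype ι] (u : A → ℝ) (w : ι → ℝ) (p : ι → A → ℝ) :
    u ⬝ᵥ mean w p = ∑ i, w i * (u ⬝ᵥ p i) := by
  simp only [dotProduct, mean, mul_sum]
  rw [sum_comm]
  exact sum_congr rfl fun i _ => sum_congr rfl fun a _ => by ring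

def strategyProfiles (ι A : Type*) [Fintype A] : Set (ι → A → ℝ) := Set.univ.pi fun _ => simplex A

lemma isCompact_strategyProfiles : IsCompact (strategyProfiles ι A) :=
  isCompact_univ_pi fun _ => isCompact_stdSimplex ℝ A

lemma convex_strategyProfiles : Convex ℝ (strategyProfiles ι A) :=
  convex_pi fun _ _ => convex_stdSimplex ℝ A

def gibbsProfile (lam : ι → ℝ) (u τ : A → ℝ) : ι → A → ℝ := fun i => gibbs (lam i) u τ

lemma gibbsProfile_mem [Nonempty A] {lam : ι → ℝ} {u τ : A → ℝ} (hτ : ∀ a, 0 < τ a) :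
    gibbsProfile lam u τ ∈ strategyProfiles ι A :=
  fun _ _ => gibbs_mem_simplex hτ

variable [Fintype ι]

def profilePayoff (w lam : ι → ℝ) (τ u : A → ℝ) (p : ι → A → ℝ) : ℝ :=
  ∑ i, w i * regPayoff (lam i) τ u (p i)

variable {w lam : ι → ℝ} {u τ : A → ℝ} {p : ι → A → ℝ}

lemma concaveOn_profilePayoff (hw : 0 ≤ w) (hlam : 0 ≤ lam) (hτ : ∀ a, 0 < τ a) :
    ConcaveOn ℝ (strategyProfiles ι A) (profilePayoff w lam τ u) := by
  refine concaveOn_finset_sum convex_strategyProfiles fun i _ => ?_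
  have h := ((concaveOn_regPayoff (u := u) (hlam i) hτ).comp_linearMap
    (LinearMap.proj (R := ℝ) (φ := fun _ : ι => A → ℝ) i)).smul (hw i)
  exact h.subset (fun p hp => (hp i trivial).1) convex_strategyProfiles

variable [Nonempty A]

lemma isMaxOn_profilePayoff_gibbsProfile (hw : 0 ≤ w) (hlam : ∀ i, 0 < lam i)
    (hτ : ∀ a, 0 < τ a) :
    IsMaxOn (profilePayoff w lam τ u) (strategyProfiles ι A) (gibbsProfile lam u τ) :=
  fun _ hp => sum_le_sum fun i _ => mul_le_mul_of_nonneg_left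
    (regPayoff_le_regPayoff_gibbs (hlam i) hτ (hp i trivial)) (hw i)

lemma mean_eq_of_isMaxOn_profilePayoff (hw : 0 ≤ w) (hlam : ∀ i, 0 < lam i)
    (hτ : ∀ a, 0 < τ a) (hp : p ∈ strategyProfiles ι A)
    (hmax : IsMaxOn (profilePayoff w lam τ u) (strategyProfiles ι A) p) :
    mean w p = mean w (gibbsProfile lam u τ) := by
  have hle : ∀ i ∈ univ, w i * regPayoff (lam i) τ u (p i)
      ≤ w i * regPayoff (lam i) τ u (gibbsProfile lam u τ i) := fun i _ =>
    mul_le_mul_of_nonneg_left (regPayoff_le_regPayoff_gibbs (hlam i) hτ (hp i trivial)) (hw i)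
  have heq := (sum_eq_sum_iff_of_le hle).1
    ((sum_le_sum hle).antisymm (hmax (gibbsProfile_mem hτ)))
  refine mean_congr fun i hwi => eq_gibbs_of_regPayoff_gibbs_le (hlam i) hτ (hp i trivial) ?_
  exact (mul_left_cancel₀ hwi (heq i (mem_univ i))).ge

end Profile

section Game

variable {ι₁ ι₂ A₁ A₂ : Type*} [Fintype ι₁] [Fintype ι₂] [Fintype A₁] [Fintype A₂]
  (M : Matrix A₁ A₂ ℝ) (w₁ : ι₁ → ℝ) (w₂ : ι₂ → ℝ) (lam₁ : ι₁ → ℝ) (lam₂ : ι₂ → ℝ)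
  (τ₁ : A₁ → ℝ) (τ₂ : A₂ → ℝ)

def lagrangian (p : ι₁ → A₁ → ℝ) (q : ι₂ → A₂ → ℝ) : ℝ :=
  profilePayoff w₁ lam₁ τ₁ (M *ᵥ mean w₂ q) p + ∑ j, w₂ j * (lam₂ j * KL (q j) τ₂)

def IsEquilibrium (p : ι₁ → A₁ → ℝ) (q : ι₂ → A₂ → ℝ) : Prop :=
  p = gibbsProfile lam₁ (M *ᵥ mean w₂ q) τ₁ ∧ q = gibbsProfile lam₂ (-(Mᵀ *ᵥ mean w₁ p)) τ₂

variable {M w₁ w₂ lam₁ lam₂ τ₁ τ₂}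

lemma lagrangian_eq (p : ι₁ → A₁ → ℝ) (q : ι₂ → A₂ → ℝ) :
    lagrangian M w₁ w₂ lam₁ lam₂ τ₁ τ₂ p q
      = -profilePayoff w₂ lam₂ τ₂ (-(Mᵀ *ᵥ mean w₁ p)) q - ∑ i, w₁ i * (lam₁ i * KL (p i) τ₁) := by
  have hbilinear : ∑ i, w₁ i * ((M *ᵥ mean w₂ q) ⬝ᵥ p i)
      = ∑ j, w₂ j * ((Mᵀ *ᵥ mean w₁ p) ⬝ᵥ q j) := by
    rw [← dotProduct_mean, ← dotProduct_mean, dotProduct_comm, dotProduct_mulVec, mulVec_transpose]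
  simp only [lagrangian, profilePayoff, regPayoff, ip_eq_dotProduct, neg_dotProduct, mul_sub,
    mul_neg, sum_sub_distrib, sum_neg_distrib, hbilinear]
  ring

lemma continuous_lagrangian :
    Continuous (Function.uncurry (lagrangian M w₁ w₂ lam₁ lam₂ τ₁ τ₂)) := by
  simp only [Function.uncurry_def, lagrangian, profilePayoff, regPayoff, ip]
  fun_prop

lemma isMaxOn_lagrangian_gibbsProfile [Nonempty A₁] (hw₁ : 0 ≤ w₁) (hlam₁ : ∀ i, 0 < lam₁ i)
    (hτ₁ : ∀ a, 0 < τ₁ a) (q : ι₂ → A₂ → ℝ) :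
    IsMaxOn (fun p => lagrangian M w₁ w₂ lam₁ lam₂ τ₁ τ₂ p q) (strategyProfiles ι₁ A₁)
      (gibbsProfile lam₁ (M *ᵥ mean w₂ q) τ₁) :=
  isMaxOn_iff.2 fun _ hp => add_le_add_left (isMaxOn_profilePayoff_gibbsProfile hw₁ hlam₁ hτ₁ hp) _

lemma isMinOn_lagrangian_gibbsProfile [Nonempty A₂] (hw₂ : 0 ≤ w₂) (hlam₂ : ∀ j, 0 < lam₂ j)
    (hτ₂ : ∀ a, 0 < τ₂ a) (p : ι₁ → A₁ → ℝ) :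
    IsMinOn (lagrangian M w₁ w₂ lam₁ lam₂ τ₁ τ₂ p) (strategyProfiles ι₂ A₂)
      (gibbsProfile lam₂ (-(Mᵀ *ᵥ mean w₁ p)) τ₂) := isMinOn_iff.2 fun _ hq => by
  have := isMaxOn_iff.1
    (isMaxOn_profilePayoff_gibbsProfile (u := -(Mᵀ *ᵥ mean w₁ p)) hw₂ hlam₂ hτ₂) _ hq
  simp only [lagrangian_eq]
  linarith

lemma mean_eq_of_isMinOn_lagrangian [Nonempty A₂] (hw₂ : 0 ≤ w₂) (hlam₂ : ∀ j, 0 < lam₂ j)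
    (hτ₂ : ∀ a, 0 < τ₂ a) {p : ι₁ → A₁ → ℝ} {q : ι₂ → A₂ → ℝ} (hq : q ∈ strategyProfiles ι₂ A₂)
    (hmin : IsMinOn (lagrangian M w₁ w₂ lam₁ lam₂ τ₁ τ₂ p) (strategyProfiles ι₂ A₂) q) :
    mean w₂ q = mean w₂ (gibbsProfile lam₂ (-(Mᵀ *ᵥ mean w₁ p)) τ₂) := by
  refine mean_eq_of_isMaxOn_profilePayoff hw₂ hlam₂ hτ₂ hq (isMaxOn_iff.2 fun q' hq' => ?_)
  have := isMinOn_iff.1 hmin q' hq'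
  simp only [lagrangian_eq] at this
  linarith

lemma convexOn_lagrangian (hw₂ : 0 ≤ w₂) (hlam₂ : 0 ≤ lam₂) (hτ₂ : ∀ a, 0 < τ₂ a)
    (p : ι₁ → A₁ → ℝ) :
    ConvexOn ℝ (strategyProfiles ι₂ A₂) (lagrangian M w₁ w₂ lam₁ lam₂ τ₁ τ₂ p) := by
  have hconcave := concaveOn_profilePayoff (u := -(Mᵀ *ᵥ mean w₁ p)) hw₂ hlam₂ hτ₂
  refine ((neg_convexOn_iff.2 hconcave).add_const (-∑ i, w₁ i * (lam₁ i * KL (p i) τ₁))).congr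
    fun q _ => ?_
  simp only [lagrangian_eq, Pi.add_apply, Pi.neg_apply, sub_eq_add_neg]

variable [Nonempty A₁] [Nonempty A₂]

lemma exists_isEquilibrium (hw₁ : 0 ≤ w₁) (hw₂ : 0 ≤ w₂) (hlam₁ : ∀ i, 0 < lam₁ i)
    (hlam₂ : ∀ j, 0 < lam₂ j) (hτ₁ : ∀ a, 0 < τ₁ a) (hτ₂ : ∀ a, 0 < τ₂ a) :
    ∃ p q, IsEquilibrium M w₁ w₂ lam₁ lam₂ τ₁ τ₂ p q := by
  let L := lagrangian M w₁ w₂ lam₁ lam₂ τ₁ τ₂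
  let br : (ι₂ → A₂ → ℝ) → ι₁ → A₁ → ℝ := fun q => gibbsProfile lam₁ (M *ᵥ mean w₂ q) τ₁
  have hbr : Continuous br :=
    continuous_pi fun _ => (continuous_gibbs hτ₁).comp (by fun_prop)
  obtain ⟨q₀, hq₀, hmin⟩ := isCompact_strategyProfiles.exists_isMinOn
    ⟨_, gibbsProfile_mem (lam := lam₂) (u := 0) hτ₂⟩
    (continuous_lagrangian.comp (hbr.prodMk continuous_id)).continuousOn
  have hsaddle : IsMinOn (L (br q₀)) (strategyProfiles ι₂ A₂) q₀ :=
    isMinOn_of_isMinOn_maxValue continuous_lagrangian hbr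
      (fun p _ => convexOn_lagrangian hw₂ (fun j => (hlam₂ j).le) hτ₂ p)
      (fun _ _ => gibbsProfile_mem hτ₁) hq₀ (isMaxOn_lagrangian_gibbsProfile hw₁ hlam₁ hτ₁ q₀) hmin
  have hmean := mean_eq_of_isMinOn_lagrangian hw₂ hlam₂ hτ₂ hq₀ hsaddle
  exact ⟨br q₀, _, by simp only [br]; rw [← hmean], rfl⟩

lemma IsEquilibrium.unique (hw₁ : 0 ≤ w₁) (hw₂ : 0 ≤ w₂) (hlam₁ : ∀ i, 0 < lam₁ i)
    (hlam₂ : ∀ j, 0 < lam₂ j) (hτ₁ : ∀ a, 0 < τ₁ a) (hτ₂ : ∀ a, 0 < τ₂ a)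
    {p p' : ι₁ → A₁ → ℝ} {q q' : ι₂ → A₂ → ℝ} (h : IsEquilibrium M w₁ w₂ lam₁ lam₂ τ₁ τ₂ p q)
    (h' : IsEquilibrium M w₁ w₂ lam₁ lam₂ τ₁ τ₂ p' q') : p = p' ∧ q = q' := by
  let L := lagrangian M w₁ w₂ lam₁ lam₂ τ₁ τ₂
  obtain ⟨hp, hq⟩ := h
  obtain ⟨hp', hq'⟩ := h'
  have hpS : p ∈ strategyProfiles ι₁ A₁ := hp ▸ gibbsProfile_mem hτ₁
  have hp'S : p' ∈ strategyProfiles ι₁ A₁ := hp' ▸ gibbsProfile_mem hτ₁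
  have hqS : q ∈ strategyProfiles ι₂ A₂ := hq ▸ gibbsProfile_mem hτ₂
  have hq'S : q' ∈ strategyProfiles ι₂ A₂ := hq' ▸ gibbsProfile_mem hτ₂
  have hmax : ∀ {p q}, p = gibbsProfile lam₁ (M *ᵥ mean w₂ q) τ₁ →
      IsMaxOn (L · q) (strategyProfiles ι₁ A₁) p := by
    rintro p q rfl
    exact isMaxOn_lagrangian_gibbsProfile hw₁ hlam₁ hτ₁ q
  have hmin : ∀ {p q}, q = gibbsProfile lam₂ (-(Mᵀ *ᵥ mean w₁ p)) τ₂ →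
      IsMinOn (L p) (strategyProfiles ι₂ A₂) q := by
    rintro p q rfl
    exact isMinOn_lagrangian_gibbsProfile hw₂ hlam₂ hτ₂ p
  have hq'min : IsMinOn (L p) (strategyProfiles ι₂ A₂) q' := isMinOn_iff.2 fun y hy =>
    calc L p q' ≤ L p' q' := isMaxOn_iff.1 (hmax hp') p hpS
      _ ≤ L p' q := isMinOn_iff.1 (hmin hq') q hqS
      _ ≤ L p q := isMaxOn_iff.1 (hmax hp) p' hp'S
      _ ≤ L p y := isMinOn_iff.1 (hmin hq) y hy
  have hmean : mean w₂ q' = mean w₂ q :=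
    hq ▸ mean_eq_of_isMinOn_lagrangian hw₂ hlam₂ hτ₂ hq'S hq'min
  have hpp' : p = p' := by rw [hp, hp', hmean]
  exact ⟨hpp', by rw [hq, hq', hpp']⟩

end Game

end RegularizedGame

open RegularizedGame in
theorem regularized_game_unique_bayes_nash_general
    {A₁ A₂ : Type*} [Fintype A₁] [Fintype A₂] [Nonempty A₁] [Nonempty A₂]
    (M : Matrix A₁ A₂ ℝ)
    (Λ₁ Λ₂ : Finset ℝ)
    (hΛ₁pos : ∀ l ∈ Λ₁, (0 : ℝ) < l) (hΛ₂pos : ∀ l ∈ Λ₂, (0 : ℝ) < l)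
    (β₁ β₂ : ℝ → ℝ)
    (hβ₁ : ∀ l ∈ Λ₁, 0 ≤ β₁ l)
    (hβ₂ : ∀ l ∈ Λ₂, 0 ≤ β₂ l)
    (τ₁ : A₁ → ℝ) (hτ₁pos : ∀ a, 0 < τ₁ a)
    (τ₂ : A₂ → ℝ) (hτ₂pos : ∀ a, 0 < τ₂ a) :
    ∃! p : ({l // l ∈ Λ₁} → A₁ → ℝ) × ({l // l ∈ Λ₂} → A₂ → ℝ),
      (∀ l : {l // l ∈ Λ₁},
        p.1 l ∈ simplex A₁ ∧
        IsMaxOn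
          (fun x => ip (M.mulVec (fun b => ∑ l' ∈ Λ₂.attach, β₂ l'.1 * p.2 l' b)) x
            - l.1 * KL x τ₁)
          (simplex A₁) (p.1 l)) ∧
      (∀ l : {l // l ∈ Λ₂},
        p.2 l ∈ simplex A₂ ∧
        IsMaxOn
          (fun x => ip (-(M.transpose.mulVec (fun a => ∑ l' ∈ Λ₁.attach, β₁ l'.1 * p.1 l' a))) x
            - l.1 * KL x τ₂)
          (simplex A₂) (p.2 l)) := by
  have hw₁ : 0 ≤ fun l : Λ₁ => β₁ l := fun l => hβ₁ l l.2
  have hw₂ : 0 ≤ fun l : Λ₂ => β₂ l := fun l => hβ₂ l l.2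
  have hlam₁ : ∀ l : Λ₁, 0 < l.1 := fun l => hΛ₁pos l l.2
  have hlam₂ : ∀ l : Λ₂, 0 < l.1 := fun l => hΛ₂pos l l.2
  refine (existsUnique_congr (q := fun p => IsEquilibrium M (fun l : Λ₁ => β₁ l)
    (fun l : Λ₂ => β₂ l) Subtype.val Subtype.val τ₁ τ₂ p.1 p.2) fun p => ?_).2 ?_
  · rw [IsEquilibrium, funext_iff, funext_iff]
    exact and_congr (forall_congr' fun l => mem_simplex_and_isMaxOn_regPayoff_iff (hlam₁ l) hτ₁pos)
      (forall_congr' fun l => mem_simplex_and_isMaxOn_regPayoff_iff (hlam₂ l) hτ₂pos)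
  · obtain ⟨p, q, h⟩ := exists_isEquilibrium hw₁ hw₂ hlam₁ hlam₂ hτ₁pos hτ₂pos
    exact ⟨(p, q), h, fun r hr => Prod.ext_iff.2 (hr.unique hw₁ hw₂ hlam₁ hlam₂ hτ₁pos hτ₂pos h)⟩

/-- the regularized two-player zero-sum Bayesian game admits exactly one
Bayes–Nash equilibrium: a unique collection `(x*_{i,λ})_{i∈{1,2}, λ∈Λ_i}` of policies
such that for each player `i` and each type `λ ∈ Λ_i`, `x*_{i,λ}` maximizes
`x ↦ ⟨M_i x̄*_{−i}, x⟩ − λ D_KL(x‖τ_i)` over `Δ(A_i)`, where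
`x̄*_{−i} = E_{λ'∼β_{−i}}[x*_{−i,λ'}]`, `M_1 = M`, `M_2 = −Mᵀ`. -/
theorem regularized_game_unique_bayes_nash
    {A₁ A₂ : Type*} [Fintype A₁] [Fintype A₂] [Nonempty A₁] [Nonempty A₂]
    (M : Matrix A₁ A₂ ℝ)
    (Λ₁ Λ₂ : Finset ℝ) (hΛ₁ : Λ₁.Nonempty) (hΛ₂ : Λ₂.Nonempty)
    (hΛ₁pos : ∀ l ∈ Λ₁, (0 : ℝ) < l) (hΛ₂pos : ∀ l ∈ Λ₂, (0 : ℝ) < l)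
    (β₁ β₂ : ℝ → ℝ)
    (hβ₁ : ∀ l ∈ Λ₁, 0 ≤ β₁ l) (hβ₁sum : ∑ l ∈ Λ₁, β₁ l = 1)
    (hβ₂ : ∀ l ∈ Λ₂, 0 ≤ β₂ l) (hβ₂sum : ∑ l ∈ Λ₂, β₂ l = 1)
    (τ₁ : A₁ → ℝ) (hτ₁ : τ₁ ∈ simplex A₁) (hτ₁pos : ∀ a, 0 < τ₁ a)
    (τ₂ : A₂ → ℝ) (hτ₂ : τ₂ ∈ simplex A₂) (hτ₂pos : ∀ a, 0 < τ₂ a) :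
    ∃! p : ({l // l ∈ Λ₁} → A₁ → ℝ) × ({l // l ∈ Λ₂} → A₂ → ℝ),
      (∀ l : {l // l ∈ Λ₁},
        p.1 l ∈ simplex A₁ ∧
        IsMaxOn
          (fun x => ip (M.mulVec (fun b => ∑ l' ∈ Λ₂.attach, β₂ l'.1 * p.2 l' b)) x
            - l.1 * KL x τ₁)
          (simplex A₁) (p.1 l)) ∧
      (∀ l : {l // l ∈ Λ₂},
        p.2 l ∈ simplex A₂ ∧
        IsMaxOn
          (fun x => ip (-(M.transpose.mulVec (fun a => ∑ l' ∈ Λ₁.attach, β₁ l'.1 * p.1 l' a))) x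
            - l.1 * KL x τ₂)
          (simplex A₂) (p.2 l)) :=
  regularized_game_unique_bayes_nash_general M Λ₁ Λ₂ hΛ₁pos hΛ₂pos β₁ β₂ hβ₁ hβ₂ τ₁ hτ₁pos τ₂ hτ₂pos
end
end
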